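/- arXiv:2205.13394 — 2 statements merged into one kernel-verified Lean document; each statement's English description precedes it below -/
import Mathlib

section
/- Let A be an n×n nonnegative matrix with all row sums strictly less than 1, and let P ≥ 0 be fixed. For c₁ ≤ c₂ (coordinate-wise) two nonnegative vectors, let x₁ and x₂ be the unique fixed points of x ↦ P ∧ (Aᵀx + cᵢ) for i = 1, 2 respectively. Then x₁ ≤ x₂ coordinate-wise (monotonicity of clearing vectors in the asset vector). -/
/-- Monotonicity of clearing vectors in the asset vector: if `c₁ ≤ c₂`, the
corresponding fixed points of `x ↦ P ∧ (Aᵀx + cᵢ)` satisfy `x₁ ≤ x₂`. -/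
theorem stmt_2 (n : ℕ) (A : Matrix (Fin n) (Fin n) ℝ)
    (hA : ∀ i j, 0 ≤ A i j) (hrow : ∀ i, ∑ j, A i j < 1)
    (P c₁ c₂ : Fin n → ℝ) (hP : ∀ i, 0 ≤ P i)
    (hc₁ : ∀ i, 0 ≤ c₁ i) (hc₂ : ∀ i, 0 ≤ c₂ i) (hle : ∀ i, c₁ i ≤ c₂ i)
    (x₁ x₂ : Fin n → ℝ)
    (hx₁ : ∀ i, x₁ i = min (P i) ((∑ j, A j i * x₁ j) + c₁ i))
    (hx₂ : ∀ i, x₂ i = min (P i) ((∑ j, A j i * x₂ j) + c₂ i)) :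
    ∀ i, x₁ i ≤ x₂ i := by
  set d : Fin n → ℝ := fun i => max (x₁ i - x₂ i) 0 with hd
  have hd0 : ∀ i, 0 ≤ d i := fun i => le_max_right _ _
  have key : ∀ i, d i ≤ ∑ j, A j i * d j := by
    intro i
    have hR : 0 ≤ ∑ j, A j i * d j :=
      Finset.sum_nonneg fun j _ => mul_nonneg (hA j i) (hd0 j)
    refine max_le ?_ hR
    have h1 : x₁ i - x₂ i ≤ ((∑ j, A j i * x₁ j) + c₁ i) - ((∑ j, A j i * x₂ j) + c₂ i) ∨
        x₁ i - x₂ i ≤ 0 := by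
      rw [hx₁ i, hx₂ i]
      rcases le_total (P i) ((∑ j, A j i * x₂ j) + c₂ i) with h | h
      · right; simp [min_eq_left h, min_le_left]
      · left
        have := min_le_right (P i) ((∑ j, A j i * x₁ j) + c₁ i)
        rw [min_eq_right h]
        linarith
    rcases h1 with h | h
    · calc x₁ i - x₂ i ≤ ((∑ j, A j i * x₁ j) + c₁ i) - ((∑ j, A j i * x₂ j) + c₂ i) := h
        _ ≤ ∑ j, A j i * (x₁ j - x₂ j) := by
            have hsub : ∑ j, A j i * (x₁ j - x₂ j)
                = (∑ j, A j i * x₁ j) - ∑ j, A j i * x₂ j := by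
              simp [mul_sub, Finset.sum_sub_distrib]
            have := hle i
            linarith
        _ ≤ ∑ j, A j i * d j := by
            apply Finset.sum_le_sum
            intro j _
            exact mul_le_mul_of_nonneg_left (le_max_left _ _) (hA j i)
    · exact h.trans hR
  by_contra hcon
  push_neg at hcon
  obtain ⟨k, hk⟩ := hcon
  have hdk : 0 < d k := lt_max_of_lt_left (by linarith)
  have hsum : ∑ i, d i ≤ ∑ j, (∑ i, A j i) * d j := by
    calc ∑ i, d i ≤ ∑ i, ∑ j, A j i * d j := Finset.sum_le_sum fun i _ => key i
      _ = ∑ j, (∑ i, A j i) * d j := by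
          rw [Finset.sum_comm]
          simp [Finset.sum_mul]
  have hlt : ∑ j, (∑ i, A j i) * d j < ∑ j, d j := by
    apply Finset.sum_lt_sum
    · intro j _
      nlinarith [hrow j, hd0 j]
    · exact ⟨k, Finset.mem_univ k, by nlinarith [hrow k, hdk]⟩
  linarith
end

section
/- In the dynamic Eisenberg–Noe model with liability carry-over, the relative liability matrix is constant over time, aᵢⱼ(t) = ζᵢⱼ for all t, if and only if the instantaneous liabilities satisfy ℓᵢⱼ(t) = ζᵢⱼ·(bᵢ(t) + Σₖ ℓᵢₖ(t)) for all i, j, t, i.e., the ratio ℓᵢⱼ(t)/(bᵢ(t) + Σₖ ℓᵢₖ(t)) is the constant ζᵢⱼ. -/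
/-- In the dynamic Eisenberg–Noe model with liability carry-over (and the induction
hypothesis `pᵢⱼ(t−1) = ζᵢⱼ Pᵢ(t−1)`), the relative liability matrix stays constant,
`aᵢⱼ(t) = pᵢⱼ(t)/Pᵢ(t) = ζᵢⱼ`, if and only if
`ℓᵢⱼ(t) = ζᵢⱼ·(bᵢ(t) + Σₖ ℓᵢₖ(t))`. -/
theorem stmt_13 (n T : ℕ) (ζ : Fin n → Fin n → ℝ)
    (b : ℕ → Fin n → ℝ) (ℓ : ℕ → Fin n → Fin n → ℝ)
    (p : ℕ → Fin n → Fin n → ℝ) (P Ptil : ℕ → Fin n → ℝ)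
    (hPpos : ∀ t, ∀ i, 0 < P t i)
    (hPtil : ∀ t i, 0 ≤ Ptil t i ∧ Ptil t i ≤ P t i)
    (hPdyn : ∀ t ∈ Finset.Icc 1 T, ∀ i,
      P t i = b t i + (∑ k, ℓ t i k) + (P (t - 1) i - Ptil (t - 1) i))
    (hpdyn : ∀ t ∈ Finset.Icc 1 T, ∀ i j,
      p t i j = ℓ t i j + p (t - 1) i j * (1 - Ptil (t - 1) i / P (t - 1) i))
    (hind : ∀ t ∈ Finset.Icc 1 T, ∀ i j, p (t - 1) i j = ζ i j * P (t - 1) i) :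
    ∀ t ∈ Finset.Icc 1 T, ∀ i j,
      (p t i j / P t i = ζ i j ↔ ℓ t i j = ζ i j * (b t i + ∑ k, ℓ t i k)) := by
  intro t ht i j
  have hP1 : (0:ℝ) < P (t-1) i := hPpos (t-1) i
  have hp : p t i j = ℓ t i j + ζ i j * (P (t-1) i - Ptil (t-1) i) := by
    rw [hpdyn t ht i j, hind t ht i j]
    field_simp
  have hPd := hPdyn t ht i
  rw [div_eq_iff (hPpos t i).ne', hp, hPd]
  constructor <;> intro h <;> nlinarith [h]
end
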